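/- (Sampling reconstruction formula.) Let B and D be two orthogonal projectors on ℝ^N with ‖B D^c‖₂ < 1, where D^c := I − D. Let ψ_1, …, ψ_N be an orthonormal basis of ℝ^N consisting of eigenvectors of B·D·B, with B·D·B ψ_i = σ_i² ψ_i. Then every bandlimited signal f (Bf = f) can be reconstructed from its samples Df via f = Σ_{i : σ_i² ≠ 0} (1/σ_i²) ⟨Df, ψ_i⟩ ψ_i, where the sum runs over the indices of the nonzero eigenvalues of B·D·B. -/

import Mathlib

open Matrix

/-- The spectral norm of a real `N × N` matrix: the operator norm of the induced
linear map on `ℝ^N` with the Euclidean norm. -/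
noncomputable def matrixSpectralNorm {N : ℕ} (M : Matrix (Fin N) (Fin N) ℝ) : ℝ :=
  ‖Matrix.toEuclideanCLM (𝕜 := ℝ) M‖

/-!
Expanding `f` in the eigenbasis, `f = ∑ ⟨f, ψᵢ⟩ ψᵢ`, it suffices to identify the coefficients.
If `σᵢ² ≠ 0` then `ψᵢ` lies in the range of `B`, so `⟨Df, ψᵢ⟩ = ⟨DBf, Bψᵢ⟩ = ⟨f, BDBψᵢ⟩ = σᵢ² ⟨f, ψᵢ⟩`.
If `σᵢ² = 0` then `‖DBψᵢ‖² = ⟨ψᵢ, BDBψᵢ⟩ = 0`, so `g := Bψᵢ` satisfies `B D^c g = g`; as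
`‖B D^c‖₂ < 1` this forces `Bψᵢ = 0`, whence `⟨f, ψᵢ⟩ = ⟨Bf, ψᵢ⟩ = ⟨f, Bψᵢ⟩ = 0`.
-/

namespace Matrix

variable {n R : Type*} [Fintype n]

theorem IsSymm.mulVec_dotProduct [CommSemiring R] {A : Matrix n n R} (hA : A.IsSymm)
    (u v : n → R) : A *ᵥ u ⬝ᵥ v = u ⬝ᵥ A *ᵥ v := by
  rw [dotProduct_comm, dotProduct_mulVec, ← mulVec_transpose, hA.eq, dotProduct_comm]

theorem eq_sum_dotProduct_smul_of_orthonormal [DecidableEq n] [CommRing R] (ψ : n → n → R)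
    (horth : ∀ i j, ψ i ⬝ᵥ ψ j = if i = j then (1 : R) else 0) (f : n → R) :
    f = ∑ i, (f ⬝ᵥ ψ i) • ψ i := by
  have hrows : of ψ * (of ψ)ᵀ = 1 := by
    ext i j
    simpa [mul_apply, one_apply, dotProduct] using horth i j
  have hcols : (of ψ)ᵀ * of ψ = 1 := mul_eq_one_comm.mp hrows
  calc f = ((of ψ)ᵀ * of ψ) *ᵥ f := by rw [hcols, one_mulVec]
    _ = (of ψ *ᵥ f) ᵥ* of ψ := by rw [← mulVec_mulVec, mulVec_transpose]
    _ = ∑ i, (f ⬝ᵥ ψ i) • ψ i := by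
      simp only [vecMul_eq_sum, of_apply, mulVec, dotProduct_comm]
      rfl

theorem mulVec_eq_self_of_mulVec_eq_smul [Field R] {B M : Matrix n n R} (hBM : B * M = M)
    {v : n → R} {c : R} (hv : M *ᵥ v = c • v) (hc : c ≠ 0) : B *ᵥ v = v := by
  have : c • B *ᵥ v = c • v := by rw [← mulVec_smul, ← hv, mulVec_mulVec, hBM]
  exact smul_right_injective _ hc this

theorem mulVec_dotProduct_eq_mul_of_mul_mul_mulVec_eq_smul [Field R] {B D : Matrix n n R}
    (hB : B.IsSymm) (hB' : IsIdempotentElem B) (hD : D.IsSymm) {f v : n → R} (hf : B *ᵥ f = f)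
    {c : R} (hv : (B * D * B) *ᵥ v = c • v) (hc : c ≠ 0) : D *ᵥ f ⬝ᵥ v = c * (f ⬝ᵥ v) := by
  have hBDB : B * (B * D * B) = B * D * B := by rw [← mul_assoc, ← mul_assoc, hB'.eq]
  have hBv : B *ᵥ v = v := mulVec_eq_self_of_mulVec_eq_smul hBDB hv hc
  calc D *ᵥ f ⬝ᵥ v = D *ᵥ B *ᵥ f ⬝ᵥ B *ᵥ v := by rw [hf, hBv]
    _ = f ⬝ᵥ (B * D * B) *ᵥ v := by
      rw [hD.mulVec_dotProduct, hB.mulVec_dotProduct, mulVec_mulVec, mulVec_mulVec, mul_assoc]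
    _ = c * (f ⬝ᵥ v) := by rw [hv, dotProduct_smul, smul_eq_mul]

theorem mulVec_dotProduct_self_of_isSymm_of_isIdempotentElem [CommSemiring R]
    {D : Matrix n n R} (hD : D.IsSymm) (hD' : IsIdempotentElem D) (x : n → R) :
    D *ᵥ x ⬝ᵥ D *ᵥ x = x ⬝ᵥ D *ᵥ x := by
  rw [hD.mulVec_dotProduct, mulVec_mulVec, hD'.eq]

theorem mulVec_mulVec_eq_zero_of_mul_mul_mulVec_eq_zero [CommRing R] [LinearOrder R]
    [IsStrictOrderedRing R] {B D : Matrix n n R} (hB : B.IsSymm) (hD : D.IsSymm)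
    (hD' : IsIdempotentElem D) {v : n → R} (hv : (B * D * B) *ᵥ v = 0) : D *ᵥ B *ᵥ v = 0 := by
  refine dotProduct_self_eq_zero.mp ?_
  rw [mulVec_dotProduct_self_of_isSymm_of_isIdempotentElem hD hD', hB.mulVec_dotProduct,
    mulVec_mulVec, mulVec_mulVec, hv, dotProduct_zero]

section SpectralNorm

variable {N : ℕ}

theorem eq_zero_of_mulVec_eq_self {M : Matrix (Fin N) (Fin N) ℝ}
    (hM : matrixSpectralNorm M < 1) {v : Fin N → ℝ} (hv : M *ᵥ v = v) : v = 0 := by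
  have hle : ‖WithLp.toLp 2 v‖ ≤ matrixSpectralNorm M * ‖WithLp.toLp 2 v‖ := by
    conv_lhs => rw [← hv, ← toEuclideanCLM_toLp]
    exact ContinuousLinearMap.le_opNorm _ _
  have hzero : ‖WithLp.toLp 2 v‖ = 0 := by nlinarith [norm_nonneg (WithLp.toLp 2 v)]
  simpa using hzero

theorem dotProduct_eq_zero_of_mul_mul_mulVec_eq_zero {B D : Matrix (Fin N) (Fin N) ℝ}
    (hB : B.IsSymm) (hB' : IsIdempotentElem B) (hD : D.IsSymm) (hD' : IsIdempotentElem D)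
    (hnorm : matrixSpectralNorm (B * (1 - D)) < 1) {f v : Fin N → ℝ} (hf : B *ᵥ f = f)
    (hv : (B * D * B) *ᵥ v = 0) : f ⬝ᵥ v = 0 := by
  have hDB : D *ᵥ B *ᵥ v = 0 := mulVec_mulVec_eq_zero_of_mul_mul_mulVec_eq_zero hB hD hD' hv
  have hfix : (B * (1 - D)) *ᵥ B *ᵥ v = B *ᵥ v := by
    rw [← mulVec_mulVec, sub_mulVec, one_mulVec, hDB, sub_zero, mulVec_mulVec, hB'.eq]
  rw [← hf, hB.mulVec_dotProduct, eq_zero_of_mulVec_eq_self hnorm hfix, dotProduct_zero]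

end SpectralNorm

end Matrix

/-- **Sampling reconstruction formula (Theorem 4).**
Let `B` and `D` be orthogonal projectors on `ℝ^N` with `‖B D^c‖₂ < 1`, `D^c := I − D`.
Let `ψ 1, …, ψ N` be an orthonormal basis of `ℝ^N` of eigenvectors of `B·D·B`, with
`B·D·B ψ i = σ² i • ψ i`. Then every bandlimited signal `f` (`Bf = f`) is reconstructed
from its samples `Df` via `f = Σ_{i : σ² i ≠ 0} (1/σ² i) ⟨Df, ψ i⟩ ψ i`. -/
theorem sampling_reconstruction_formula
    {N : ℕ} (B D : Matrix (Fin N) (Fin N) ℝ)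
    (hBsym : B.transpose = B) (hDsym : D.transpose = D)
    (hBidem : B * B = B) (hDidem : D * D = D)
    (hnorm : matrixSpectralNorm (B * (1 - D)) < 1)
    (ψ : Fin N → (Fin N → ℝ)) (σsq : Fin N → ℝ)
    (horth : ∀ i j, ψ i ⬝ᵥ ψ j = if i = j then (1 : ℝ) else 0)
    (heig : ∀ i, (B * D * B).mulVec (ψ i) = σsq i • ψ i)
    (f : Fin N → ℝ) (hf : B.mulVec f = f) :
    f = ∑ i ∈ Finset.univ.filter (fun i => σsq i ≠ 0),
          ((D.mulVec f ⬝ᵥ ψ i) / σsq i) • ψ i := by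
  have coeff_eq_zero (i : Fin N) (hi : σsq i = 0) : f ⬝ᵥ ψ i = 0 :=
    dotProduct_eq_zero_of_mul_mul_mulVec_eq_zero hBsym hBidem hDsym hDidem hnorm hf
      (by rw [heig i, hi, zero_smul])
  calc f = ∑ i, (f ⬝ᵥ ψ i) • ψ i := eq_sum_dotProduct_smul_of_orthonormal ψ horth f
    _ = ∑ i ∈ Finset.univ.filter (fun i => σsq i ≠ 0), (f ⬝ᵥ ψ i) • ψ i := by
      refine (Finset.sum_filter_of_ne fun i _ hne => ?_).symm
      contrapose! hne
      rw [coeff_eq_zero i hne, zero_smul]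
    _ = _ := by
      refine Finset.sum_congr rfl fun i hi => ?_
      have hσ : σsq i ≠ 0 := (Finset.mem_filter.mp hi).2
      rw [mulVec_dotProduct_eq_mul_of_mul_mul_mulVec_eq_smul hBsym hBidem hDsym hf (heig i) hσ,
        mul_div_cancel_left₀ _ hσ]
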